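/- If G and H are finite graphs, each with at least one vertex, then gp(G + H) = max{ω(G) + ω(H), ρ(G), ρ(H)}. -/

import Mathlib

namespace SimpleGraph

variable {V : Type*}

/-- `S` is a general position set of `G`: no vertex of `S` lies on a geodesic
(shortest path) between two other vertices of `S`. -/
def IsGPSet (G : SimpleGraph V) (S : Set V) : Prop :=
  ∀ ⦃u v w : V⦄, u ∈ S → v ∈ S → w ∈ S → u ≠ v → u ≠ w → v ≠ w →
    ∀ p : G.Walk u v, p.IsPath → p.length = G.dist u v → w ∉ p.support

/-- The general position number of `G`: the maximum cardinality of a general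
position set of `G`. -/
noncomputable def gpNumber (G : SimpleGraph V) : ℕ :=
  sSup {n | ∃ S : Set V, G.IsGPSet S ∧ n = S.ncard}

/-- `ρ(G)`: the maximum number of vertices in a union of pairwise independent
complete subgraphs of `G`, where complete subgraphs `Q`, `Q'` are independent
if `d_G(u,u') ≥ 2` for every `u ∈ Q` and `u' ∈ Q'`. -/
noncomputable def rho (G : SimpleGraph V) : ℕ :=
  sSup {n | ∃ 𝒬 : Finset (Finset V),
    (∀ Q ∈ 𝒬, G.IsClique (Q : Set V)) ∧
    (∀ Q ∈ 𝒬, ∀ Q' ∈ 𝒬, Q ≠ Q' → ∀ u ∈ Q, ∀ u' ∈ Q', 2 ≤ G.edist u u') ∧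
    n = (⋃ Q ∈ 𝒬, (Q : Set V)).ncard}

/-- A graph is complete multipartite iff non-adjacency is transitive. -/
def IsCompleteMultipartite' (G : SimpleGraph V) : Prop := Transitive (¬G.Adj · ·)

/-- `η(G)`: the maximum order of an induced complete multipartite subgraph of
the complement of `G`. -/
noncomputable def eta (G : SimpleGraph V) : ℕ :=
  sSup {n | ∃ B : Set V, (Gᶜ.induce B).IsCompleteMultipartite' ∧ n = B.ncard}

/-- An independent set of a graph. -/
def IsIndepSet' (G : SimpleGraph V) (S : Set V) : Prop :=
  S.Pairwise fun u v => ¬ G.Adj u v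

/-- The independence number `α(G)`. -/
noncomputable def indepNum' (G : SimpleGraph V) : ℕ :=
  sSup {n | ∃ S : Set V, G.IsIndepSet' S ∧ n = S.ncard}

end SimpleGraph

/-- The Kneser graph `K(n,k)`: vertices are the `k`-element subsets of an
`n`-element set, two vertices adjacent iff the corresponding sets are disjoint. -/
def kneserGraph (n k : ℕ) : SimpleGraph {s : Finset (Fin n) // s.card = k} where
  Adj a b := Disjoint a.1 b.1 ∧ a ≠ b
  symm := by
    constructor
    rintro a b ⟨h1, h2⟩
    exact ⟨h1.symm, h2.symm⟩
  loopless := by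
    constructor
    rintro a ⟨-, h⟩
    exact h rfl

/-- The join `G + H` of two (disjoint) graphs: the disjoint union of `G` and
`H` together with all edges between a vertex of `G` and a vertex of `H`. -/
def graphJoin {α β : Type*} (G : SimpleGraph α) (H : SimpleGraph β) :
    SimpleGraph (α ⊕ β) where
  Adj x y := match x, y with
    | Sum.inl a, Sum.inl a' => G.Adj a a'
    | Sum.inr b, Sum.inr b' => H.Adj b b'
    | _, _ => True
  symm := by
    constructor
    rintro (a | b) (a' | b') h <;> simp_all
    exacts [G.adj_symm h, H.adj_symm h]
  loopless := by
    constructor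
    rintro (a | b) h <;> simp_all

/-!
The join has diameter at most two, so a set is in general position exactly when it induces a
disjoint union of cliques (it has no induced path on three vertices). If such a set meets both
`G` and `H`, any vertex on one side is a common neighbour of any two vertices on the other, so it
is a clique of `G` together with a clique of `H`: at most `ω(G) + ω(H)` vertices. If it lies in
`G`, its components are pairwise independent cliques of `G`, so it has at most `ρ(G)` vertices.
Conversely a clique of `G` with a clique of `H`, or a union of pairwise independent cliques of
one side, induces a disjoint union of cliques in the join.
-/

lemma Set.ncard_image_inl_union_image_inr {α β : Type*} [Finite α] [Finite β] (A : Set α)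
    (B : Set β) : (Sum.inl '' A ∪ Sum.inr '' B).ncard = A.ncard + B.ncard := by
  rw [Set.ncard_union_eq Set.disjoint_image_inl_image_inr,
    Set.ncard_image_of_injective _ Sum.inl_injective,
    Set.ncard_image_of_injective _ Sum.inr_injective]

namespace SimpleGraph

variable {V W : Type*} {G : SimpleGraph V} {G' : SimpleGraph W} {S : Set V} {u v w : V}

lemma two_le_edist_iff : 2 ≤ G.edist u v ↔ u ≠ v ∧ ¬G.Adj u v := by
  rw [← not_lt, ENat.lt_two_iff, edist_le_one_iff_adj_or_eq]
  tauto

lemma dist_eq_two_of_adj_of_adj (huv : u ≠ v) (hnadj : ¬G.Adj u v) (huw : G.Adj u w)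
    (hwv : G.Adj w v) : G.dist u v = 2 := by
  have hle : G.dist u v ≤ 2 := dist_le (.cons huw (.cons hwv .nil))
  have hne0 : G.dist u v ≠ 0 :=
    (Reachable.dist_eq_zero_iff ⟨.cons huw (.cons hwv .nil)⟩).not.mpr huv
  have hne1 : G.dist u v ≠ 1 := dist_eq_one_iff_adj.not.mpr hnadj
  omega

lemma IsClique.ncard_le_cliqueNum [Finite V] (h : G.IsClique S) :
    S.ncard ≤ G.cliqueNum := by
  obtain ⟨s, rfl⟩ := S.toFinite.exists_finset_coe
  rw [Set.ncard_coe_finset]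
  exact h.card_le_cliqueNum

/-- `S` induces a disjoint union of cliques: it contains no induced path on three vertices. -/
def IsClusterSet (G : SimpleGraph V) (S : Set V) : Prop :=
  ∀ ⦃u v w⦄, u ∈ S → v ∈ S → w ∈ S → u ≠ v → G.Adj u w → G.Adj w v → G.Adj u v

lemma IsClique.isClusterSet (h : G.IsClique S) : G.IsClusterSet S :=
  fun _ _ _ hu hv _ huv _ _ => h hu hv huv

lemma IsClusterSet.image (h : G.IsClusterSet S) (f : G ↪g G') :
    G'.IsClusterSet (f '' S) := by
  rintro _ _ _ ⟨u, hu, rfl⟩ ⟨v, hv, rfl⟩ ⟨w, hw, rfl⟩ huv huw hwv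
  exact f.map_adj_iff.mpr <|
    h hu hv hw (ne_of_apply_ne f huv) (f.map_adj_iff.mp huw) (f.map_adj_iff.mp hwv)

lemma IsClusterSet.preimage {S : Set W} (h : G'.IsClusterSet S) (f : G ↪g G') :
    G.IsClusterSet (f ⁻¹' S) := fun _ _ _ hu hv hw huv huw hwv =>
  f.map_adj_iff.mp <|
    h hu hv hw (f.injective.ne huv) (f.map_adj_iff.mpr huw) (f.map_adj_iff.mpr hwv)

lemma IsClusterSet.eq_or_adj_trans (h : G.IsClusterSet S) (hu : u ∈ S) (hv : v ∈ S)
    (hw : w ∈ S) (huw : u = w ∨ G.Adj u w) (hwv : w = v ∨ G.Adj w v) : u = v ∨ G.Adj u v := by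
  rcases huw with rfl | huw
  · exact hwv
  rcases hwv with rfl | hwv
  · exact .inr huw
  exact or_iff_not_imp_left.mpr fun huv => h hu hv hw huv huw hwv

lemma IsGPSet.isClusterSet (h : G.IsGPSet S) : G.IsClusterSet S := by
  intro u v w hu hv hw huv huw hwv
  by_contra hnadj
  let p : G.Walk u v := .cons huw (.cons hwv .nil)
  refine h hu hv hw huv huw.ne hwv.ne.symm p ?_ ?_ (by simp [p])
  · simp [p, Walk.isPath_def, huv, huw.ne, hwv.ne]
  · simp [p, dist_eq_two_of_adj_of_adj huv hnadj huw hwv]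

lemma IsClusterSet.isGPSet (hdist : ∀ u v, G.dist u v ≤ 2) (h : G.IsClusterSet S) :
    G.IsGPSet S := by
  intro u v w hu hv hw huv huw hvw p _ hlen
  have hlen2 : p.length ≤ 2 := hlen ▸ hdist u v
  rcases p with _ | ⟨hux, _ | ⟨hxv, _ | ⟨_, _⟩⟩⟩
  · exact absurd rfl huv
  · simp [huw.symm, hvw.symm]
  · simp only [Walk.support_cons, Walk.support_nil, List.mem_cons, List.not_mem_nil,
      or_false]
    rintro (rfl | rfl | rfl)
    · exact huw rfl
    · have : G.dist u v = 1 := dist_eq_one_iff_adj.mpr (h hu hv hw huv hux hxv)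
      simp [this] at hlen
    · exact hvw rfl
  · simp at hlen2

lemma isGPSet_iff_isClusterSet (hdist : ∀ u v, G.dist u v ≤ 2) :
    G.IsGPSet S ↔ G.IsClusterSet S :=
  ⟨IsGPSet.isClusterSet, IsClusterSet.isGPSet hdist⟩

lemma bddAbove_of_forall_exists_ncard_eq [Finite V] {s : Set ℕ}
    (h : ∀ n ∈ s, ∃ S : Set V, n = S.ncard) : BddAbove s := by
  refine ⟨Nat.card V, fun n hn => ?_⟩
  obtain ⟨S, rfl⟩ := h n hn
  exact Set.ncard_le_card S

lemma IsGPSet.ncard_le_gpNumber [Finite V] (h : G.IsGPSet S) :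
    S.ncard ≤ G.gpNumber :=
  le_csSup (bddAbove_of_forall_exists_ncard_eq fun _ ⟨S, _, hS⟩ => ⟨S, hS⟩) ⟨S, h, rfl⟩

lemma gpNumber_le {n : ℕ} (h : ∀ S, G.IsGPSet S → S.ncard ≤ n) : G.gpNumber ≤ n :=
  csSup_le' fun _ ⟨S, hS, hn⟩ => hn ▸ h S hS

lemma IsClusterSet.ncard_le_rho [Finite V] (h : G.IsClusterSet S) : S.ncard ≤ G.rho := by
  classical
  obtain ⟨T, rfl⟩ := S.toFinite.exists_finset_coe
  let cls (a : V) : Finset V := {x ∈ T | a = x ∨ G.Adj a x}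
  have cls_eq {a b : V} (ha : a ∈ T) (hb : b ∈ T) (hab : a = b ∨ G.Adj a b) :
      cls a = cls b := by
    ext x
    simp only [cls, Finset.mem_filter]
    exact and_congr_right fun hx => ⟨h.eq_or_adj_trans hb hx ha (hab.imp Eq.symm Adj.symm),
      h.eq_or_adj_trans ha hx hb hab⟩
  have mem_cls {a x : V} : x ∈ cls a ↔ x ∈ T ∧ (a = x ∨ G.Adj a x) := Finset.mem_filter
  refine le_csSup (bddAbove_of_forall_exists_ncard_eq fun _ ⟨_, _, _, hn⟩ => ⟨_, hn⟩)
    ⟨T.image cls, ?_, ?_, ?_⟩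
  · simp only [Finset.mem_image]
    rintro _ ⟨a, ha, rfl⟩ x hx y hy hxy
    rw [Finset.mem_coe, mem_cls] at hx hy
    exact (h.eq_or_adj_trans hx.1 hy.1 ha (hx.2.imp Eq.symm Adj.symm) hy.2).resolve_left hxy
  · simp only [Finset.mem_image]
    rintro _ ⟨a, ha, rfl⟩ _ ⟨b, hb, rfl⟩ hne u hu u' hu'
    rw [mem_cls] at hu hu'
    rw [two_le_edist_iff, ← not_or]
    exact fun huu' => hne <|
      (cls_eq ha hu.1 hu.2).trans ((cls_eq hu.1 hu'.1 huu').trans (cls_eq hb hu'.1 hu'.2).symm)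
  · congr 1
    ext x
    simp only [Finset.mem_coe, Set.mem_iUnion, Finset.mem_image, exists_prop]
    exact ⟨fun hx => ⟨_, ⟨x, hx, rfl⟩, mem_cls.2 ⟨hx, .inl rfl⟩⟩,
      fun ⟨_, ⟨_, _, rfl⟩, hx⟩ => (mem_cls.1 hx).1⟩

lemma exists_isClusterSet_ncard_eq_rho [Finite V] (G : SimpleGraph V) :
    ∃ S, G.IsClusterSet S ∧ S.ncard = G.rho := by
  obtain ⟨𝒬, hclique, hindep, hcard⟩ : G.rho ∈ {n | ∃ 𝒬 : Finset (Finset V),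
      (∀ Q ∈ 𝒬, G.IsClique (Q : Set V)) ∧
      (∀ Q ∈ 𝒬, ∀ Q' ∈ 𝒬, Q ≠ Q' → ∀ u ∈ Q, ∀ u' ∈ Q', 2 ≤ G.edist u u') ∧
      n = (⋃ Q ∈ 𝒬, (Q : Set V)).ncard} :=
    Nat.sSup_mem ⟨0, ∅, by simp, by simp, by simp⟩
      (bddAbove_of_forall_exists_ncard_eq fun _ ⟨_, _, _, hn⟩ => ⟨_, hn⟩)
  refine ⟨_, ?_, hcard.symm⟩
  have eq_of_adj {Q Q' : Finset V} {u v : V} (hQ : Q ∈ 𝒬) (hQ' : Q' ∈ 𝒬) (hu : u ∈ Q)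
      (hv : v ∈ Q') (huv : G.Adj u v) : Q = Q' := by
    by_contra hne
    exact (two_le_edist_iff.mp (hindep Q hQ Q' hQ' hne u hu v hv)).2 huv
  intro u v w hu hv hw huv huw hwv
  simp only [Set.mem_iUnion, Finset.mem_coe, exists_prop] at hu hv hw
  obtain ⟨Q, hQ, hu⟩ := hu
  obtain ⟨Qv, hQv, hv⟩ := hv
  obtain ⟨Qw, hQw, hw⟩ := hw
  obtain rfl := eq_of_adj hQ hQw hu hw huw
  obtain rfl := eq_of_adj hQ hQv hw hv hwv
  exact hclique Q hQ hu hv huv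

section graphJoin

variable {α β : Type*} {G : SimpleGraph α} {H : SimpleGraph β}

def Embedding.joinInl : G ↪g graphJoin G H := ⟨.inl, Iff.rfl⟩

def Embedding.joinInr : H ↪g graphJoin G H := ⟨.inr, Iff.rfl⟩

lemma graphJoin_adj_inl_inr (a : α) (b : β) : (graphJoin G H).Adj (.inl a) (.inr b) := trivial

lemma graphJoin_adj_inr_inl (b : β) (a : α) : (graphJoin G H).Adj (.inr b) (.inl a) := trivial

lemma graphJoin_dist_le_two [Nonempty α] [Nonempty β] (x y : α ⊕ β) :
    (graphJoin G H).dist x y ≤ 2 := by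
  obtain ⟨a⟩ := ‹Nonempty α›
  obtain ⟨b⟩ := ‹Nonempty β›
  rcases x with a₁ | b₁ <;> rcases y with a₂ | b₂
  · exact dist_le <|
      .cons (graphJoin_adj_inl_inr a₁ b) (.cons (graphJoin_adj_inr_inl b a₂) .nil)
  · exact (dist_eq_one_iff_adj.mpr (graphJoin_adj_inl_inr a₁ b₂)).trans_le one_le_two
  · exact (dist_eq_one_iff_adj.mpr (graphJoin_adj_inr_inl b₁ a₂)).trans_le one_le_two
  · exact dist_le <|
      .cons (graphJoin_adj_inr_inl b₁ a) (.cons (graphJoin_adj_inl_inr a b₂) .nil)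

lemma IsClique.graphJoin {s : Set α} {t : Set β} (hs : G.IsClique s) (ht : H.IsClique t) :
    (graphJoin G H).IsClique (Sum.inl '' s ∪ Sum.inr '' t) := by
  rintro _ (⟨a, ha, rfl⟩ | ⟨b, hb, rfl⟩) _ (⟨a', ha', rfl⟩ | ⟨b', hb', rfl⟩) hne
  exacts [hs ha ha' (ne_of_apply_ne _ hne), graphJoin_adj_inl_inr a b',
    graphJoin_adj_inr_inl b a', ht hb hb' (ne_of_apply_ne _ hne)]

lemma IsClusterSet.ncard_le_of_graphJoin [Finite α] [Finite β] {S : Set (α ⊕ β)}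
    (h : (graphJoin G H).IsClusterSet S) :
    S.ncard ≤ max (G.cliqueNum + H.cliqueNum) (max G.rho H.rho) := by
  rw [← Set.image_preimage_inl_union_image_preimage_inr S,
    Set.ncard_image_inl_union_image_inr]
  rcases (Sum.inr ⁻¹' S).eq_empty_or_nonempty with hB | ⟨b, hb⟩
  · have : (Sum.inl ⁻¹' S).ncard ≤ G.rho := (h.preimage Embedding.joinInl).ncard_le_rho
    rw [hB, Set.ncard_empty]
    omega
  rcases (Sum.inl ⁻¹' S).eq_empty_or_nonempty with hA | ⟨a, ha⟩
  · have : (Sum.inr ⁻¹' S).ncard ≤ H.rho := (h.preimage Embedding.joinInr).ncard_le_rho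
    rw [hA, Set.ncard_empty]
    omega
  have hA : G.IsClique (Sum.inl ⁻¹' S) := fun _ ha₁ _ ha₂ hne =>
    h ha₁ ha₂ hb (Sum.inl_injective.ne hne) (graphJoin_adj_inl_inr _ b)
      (graphJoin_adj_inr_inl b _)
  have hB : H.IsClique (Sum.inr ⁻¹' S) := fun _ hb₁ _ hb₂ hne =>
    h hb₁ hb₂ ha (Sum.inr_injective.ne hne) (graphJoin_adj_inr_inl _ a)
      (graphJoin_adj_inl_inr a _)
  have := hA.ncard_le_cliqueNum
  have := hB.ncard_le_cliqueNum
  omega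

end graphJoin

end SimpleGraph

open SimpleGraph

/-- If `G` and `H` are finite graphs, each with at least one vertex, then
`gp(G + H) = max {ω(G) + ω(H), ρ(G), ρ(H)}`. -/
theorem gpNumber_graphJoin_eq_max_rho {α β : Type*} [Fintype α] [Fintype β]
    [Nonempty α] [Nonempty β] (G : SimpleGraph α) (H : SimpleGraph β) :
    (graphJoin G H).gpNumber = max (G.cliqueNum + H.cliqueNum) (max G.rho H.rho) := by
  have isGPSet_iff (S : Set (α ⊕ β)) :
      (graphJoin G H).IsGPSet S ↔ (graphJoin G H).IsClusterSet S :=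
    isGPSet_iff_isClusterSet graphJoin_dist_le_two
  refine le_antisymm (gpNumber_le fun S hS => ((isGPSet_iff S).1 hS).ncard_le_of_graphJoin)
    (max_le ?_ (max_le ?_ ?_))
  · obtain ⟨s, hs⟩ := G.exists_isNClique_cliqueNum
    obtain ⟨t, ht⟩ := H.exists_isNClique_cliqueNum
    rw [← hs.card_eq, ← ht.card_eq, ← Set.ncard_coe_finset, ← Set.ncard_coe_finset,
      ← Set.ncard_image_inl_union_image_inr]
    exact ((isGPSet_iff _).2 (hs.isClique.graphJoin ht.isClique).isClusterSet).ncard_le_gpNumber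
  · obtain ⟨A, hA, hcard⟩ := G.exists_isClusterSet_ncard_eq_rho
    rw [← hcard, ← Set.ncard_image_of_injective A Embedding.joinInl.injective]
    exact ((isGPSet_iff _).2 (hA.image Embedding.joinInl)).ncard_le_gpNumber
  · obtain ⟨B, hB, hcard⟩ := H.exists_isClusterSet_ncard_eq_rho
    rw [← hcard, ← Set.ncard_image_of_injective B Embedding.joinInr.injective]
    exact ((isGPSet_iff _).2 (hB.image Embedding.joinInr)).ncard_le_gpNumber
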